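/- Let σ, ξ, ζ, g, n, ρ be real numbers with g > 0, 0 < ξ < 1, σ > ξ, and suppose Θ_S := ((σ−ξ)·n + ξ·ρ) / (ξ·(1−ξ)·g) − (σ−ξ)·(1−ζ) / (ξ·(1−ξ)) > 0. Then the equation [(1−ξ)·(1−l) + (σ/ξ − 1)·(1−ζ)·l] · g / l = (σ/ξ − 1)·n + ρ has a unique solution l in (0,1), namely l = 1/(1 + Θ_S). -/

import Mathlib

/-!
Dividing the balanced-growth condition `[A(1 - l) + B l] g / l = C` through by `A g` turns it
into `(1 - l) / l = Θ` with `Θ = (C - B g) / (A g)`, i.e. `l (1 + Θ) = 1`. With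
`A = 1 - ξ`, `B = (σ/ξ - 1)(1 - ζ)` and `C = (σ/ξ - 1) n + ρ` this `Θ` is the paper's `Θ_S`, and
`Θ_S > 0` puts the unique root `1 / (1 + Θ_S)` inside `(0, 1)`.
-/

open Set

section

variable {A B C g : ℝ}

theorem linear_mul_div_eq_iff {l : ℝ} (hAg : A * g ≠ 0) (hl : l ≠ 0) :
    (A * (1 - l) + B * l) * g / l = C ↔ l * (1 + (C - B * g) / (A * g)) = 1 := by
  rw [div_eq_iff hl, ← sub_eq_zero, ← sub_eq_zero (b := (1 : ℝ))]
  have : l * (1 + (C - B * g) / (A * g)) - 1 =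
      -((A * (1 - l) + B * l) * g - C * l) / (A * g) := by
    field_simp [left_ne_zero_of_mul hAg, right_ne_zero_of_mul hAg]
    ring
  rw [this, neg_div, neg_eq_zero, div_eq_zero_iff, or_iff_left hAg]

theorem one_div_one_add_mem_Ioo {Θ : ℝ} (hΘ : 0 < Θ) : 1 / (1 + Θ) ∈ Ioo (0 : ℝ) 1 :=
  ⟨by positivity, (div_lt_one (by linarith)).2 (by linarith)⟩

theorem existsUnique_mem_Ioo_linear_mul_div_eq (hAg : A * g ≠ 0)
    (hΘ : 0 < (C - B * g) / (A * g)) :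
    (∃! l : ℝ, l ∈ Ioo (0 : ℝ) 1 ∧ (A * (1 - l) + B * l) * g / l = C) ∧
      (1 / (1 + (C - B * g) / (A * g)) ∈ Ioo (0 : ℝ) 1 ∧
        (A * (1 - 1 / (1 + (C - B * g) / (A * g))) + B * (1 / (1 + (C - B * g) / (A * g)))) * g /
          (1 / (1 + (C - B * g) / (A * g))) = C) := by
  set Θ := (C - B * g) / (A * g)
  have hroot : 1 / (1 + Θ) ∈ Ioo (0 : ℝ) 1 ∧ (A * (1 - 1 / (1 + Θ)) + B * (1 / (1 + Θ))) * g /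
      (1 / (1 + Θ)) = C := by
    have hmem := one_div_one_add_mem_Ioo hΘ
    exact ⟨hmem, (linear_mul_div_eq_iff hAg hmem.1.ne').2 (one_div_mul_cancel (by linarith))⟩
  refine ⟨⟨1 / (1 + Θ), hroot, ?_⟩, hroot⟩
  rintro l ⟨hl, hlC⟩
  exact eq_one_div_of_mul_eq_one_left ((linear_mul_div_eq_iff hAg hl.1.ne').1 hlC)

end

theorem planner_theta_eq {σ ξ ζ g n ρ : ℝ} (hg : g ≠ 0) (hξ : ξ ≠ 0) :
    ((σ - ξ) * n + ξ * ρ) / (ξ * (1 - ξ) * g) - (σ - ξ) * (1 - ζ) / (ξ * (1 - ξ)) =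
      ((σ / ξ - 1) * n + ρ - (σ / ξ - 1) * (1 - ζ) * g) / ((1 - ξ) * g) := by
  field_simp

theorem stmt6_general (σ ξ ζ g n ρ : ℝ) (hg : g > 0) (hξ0 : 0 < ξ) (hξ1 : ξ < 1)
    (hΘ : ((σ - ξ) * n + ξ * ρ) / (ξ * (1 - ξ) * g) -
          (σ - ξ) * (1 - ζ) / (ξ * (1 - ξ)) > 0) :
    (∃! l : ℝ, l ∈ Set.Ioo (0 : ℝ) 1 ∧
        ((1 - ξ) * (1 - l) + (σ / ξ - 1) * (1 - ζ) * l) * g / l =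
          (σ / ξ - 1) * n + ρ) ∧
    (1 / (1 + (((σ - ξ) * n + ξ * ρ) / (ξ * (1 - ξ) * g) -
          (σ - ξ) * (1 - ζ) / (ξ * (1 - ξ)))) ∈ Set.Ioo (0 : ℝ) 1 ∧
      ((1 - ξ) * (1 - 1 / (1 + (((σ - ξ) * n + ξ * ρ) / (ξ * (1 - ξ) * g) -
              (σ - ξ) * (1 - ζ) / (ξ * (1 - ξ))))) +
          (σ / ξ - 1) * (1 - ζ) *
            (1 / (1 + (((σ - ξ) * n + ξ * ρ) / (ξ * (1 - ξ) * g) -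
              (σ - ξ) * (1 - ζ) / (ξ * (1 - ξ)))))) * g /
          (1 / (1 + (((σ - ξ) * n + ξ * ρ) / (ξ * (1 - ξ) * g) -
            (σ - ξ) * (1 - ζ) / (ξ * (1 - ξ))))) =
        (σ / ξ - 1) * n + ρ) := by
  rw [planner_theta_eq hg.ne' hξ0.ne'] at hΘ ⊢
  exact existsUnique_mem_Ioo_linear_mul_div_eq (mul_ne_zero (by linarith) hg.ne') hΘ

/-- Proposition 4: the planner's R&D labor share is the unique `l ∈ (0,1)` solving
`[(1−ξ)(1−l) + (σ/ξ−1)(1−ζ)l]·g/l = (σ/ξ−1)·n + ρ`, namely `l = 1/(1+Θ_S)`. -/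
theorem stmt6 (σ ξ ζ g n ρ : ℝ) (hg : g > 0) (hξ0 : 0 < ξ) (hξ1 : ξ < 1)
    (hσξ : σ > ξ)
    (hΘ : ((σ - ξ) * n + ξ * ρ) / (ξ * (1 - ξ) * g) -
          (σ - ξ) * (1 - ζ) / (ξ * (1 - ξ)) > 0) :
    (∃! l : ℝ, l ∈ Set.Ioo (0 : ℝ) 1 ∧
        ((1 - ξ) * (1 - l) + (σ / ξ - 1) * (1 - ζ) * l) * g / l =
          (σ / ξ - 1) * n + ρ) ∧
    (1 / (1 + (((σ - ξ) * n + ξ * ρ) / (ξ * (1 - ξ) * g) -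
          (σ - ξ) * (1 - ζ) / (ξ * (1 - ξ)))) ∈ Set.Ioo (0 : ℝ) 1 ∧
      ((1 - ξ) * (1 - 1 / (1 + (((σ - ξ) * n + ξ * ρ) / (ξ * (1 - ξ) * g) -
              (σ - ξ) * (1 - ζ) / (ξ * (1 - ξ))))) +
          (σ / ξ - 1) * (1 - ζ) *
            (1 / (1 + (((σ - ξ) * n + ξ * ρ) / (ξ * (1 - ξ) * g) -
              (σ - ξ) * (1 - ζ) / (ξ * (1 - ξ)))))) * g /
          (1 / (1 + (((σ - ξ) * n + ξ * ρ) / (ξ * (1 - ξ) * g) -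
            (σ - ξ) * (1 - ζ) / (ξ * (1 - ξ))))) =
        (σ / ξ - 1) * n + ρ) :=
  stmt6_general σ ξ ζ g n ρ hg hξ0 hξ1 hΘ
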